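/- For the complete t-partite graph K(u_1, ..., u_t) on n = u_1 + ... + u_t vertices, the number of partitions of its vertex set into t+1 nonempty independent sets equals (sum over i of 2^{u_i - 1}) minus t. -/

import Mathlib

/-!
An independent set of `K(u_1, …, u_t)` lies inside one part `V_i`, so the partitions counted are
exactly the refinements of `{V_1, …, V_t}` with one block more. In such a refinement every `V_i`
still contains a block, hence exactly one `V_i` is split into two blocks and the others are kept
whole. A split of `V_i` is determined by the block avoiding a fixed vertex of `V_i`, which can be
any nonempty subset of the other `u_i - 1` vertices: `2 ^ (u_i - 1) - 1` choices.
-/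

open Finset

theorem Finset.exists_eq_two_of_sum_eq_card_add_one {ι : Type*} {s : Finset ι} {n : ι → ℕ}
    (hn : ∀ i ∈ s, 1 ≤ n i) (hsum : ∑ i ∈ s, n i = #s + 1) :
    ∃ i ∈ s, n i = 2 ∧ ∀ j ∈ s, j ≠ i → n j = 1 := by
  classical
  have hexcess : ∑ i ∈ s, (n i - 1) = 1 := by
    rw [sum_tsub_distrib s hn, hsum, card_eq_sum_ones, Nat.add_sub_cancel_left]
  obtain ⟨i, hi, hi0⟩ := exists_ne_zero_of_sum_ne_zero (hexcess ▸ one_ne_zero)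
  rw [← add_sum_erase s _ hi] at hexcess
  have hrest : ∑ j ∈ s.erase i, (n j - 1) = 0 := by omega
  refine ⟨i, hi, by have := hn i hi; omega, fun j hj hji => ?_⟩
  have := (sum_eq_zero_iff.1 hrest) j (mem_erase.2 ⟨hji, hj⟩)
  have := hn j hj
  omega

namespace Finpartition

theorem eq_indiscrete_of_card_parts_eq_one {α : Type*} [Lattice α] [OrderBot α] {a : α}
    (P : Finpartition a) (ha : a ≠ ⊥) (hP : #P.parts = 1) : P = indiscrete ha := by
  obtain ⟨b, hb⟩ := card_eq_one.1 hP
  ext1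
  have hba : b = a := by simpa [hb] using P.sup_parts
  rw [hb, hba, indiscrete_parts]

theorem bind_le {α : Type*} [Lattice α] [OrderBot α] [IsModularLattice α] [DecidableEq α] {a : α}
    (F : Finpartition a) (Q : ∀ c ∈ F.parts, Finpartition c) : F.bind Q ≤ F := by
  intro p hp
  obtain ⟨c, hc, hpc⟩ := mem_bind.1 hp
  exact ⟨c, hc, (Q c hc).le hpc⟩

section DistribLattice

variable {α : Type*} [DistribLattice α] [OrderBot α] [DecidableEq α] {a c : α}

theorem restrict_bind (F : Finpartition a) (Q : ∀ c ∈ F.parts, Finpartition c)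
    (hc : c ∈ F.parts) : (F.bind Q).restrict (F.le hc) = Q c hc := by
  ext p
  simp only [restrict, Finset.mem_erase, Finset.mem_image, mem_bind]
  constructor
  · rintro ⟨hp, q, ⟨d, hd, hq⟩, rfl⟩
    obtain rfl | hdc := eq_or_ne d c
    · rwa [inf_eq_left.2 ((Q d hd).le hq)]
    · exact absurd ((F.disjoint hd hc hdc).mono_left ((Q d hd).le hq)).eq_bot hp
  · intro hp
    exact ⟨(Q c hc).ne_bot hp, p, ⟨c, hc, hp⟩, inf_eq_left.2 ((Q c hc).le hp)⟩

theorem bind_restrict_of_le {F P : Finpartition a} (h : P ≤ F) :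
    F.bind (fun _ hc => P.restrict (F.le hc)) = P := by
  ext p
  simp only [mem_bind, restrict, Finset.mem_erase, Finset.mem_image]
  constructor
  · rintro ⟨c, hc, hp, q, hq, rfl⟩
    obtain ⟨d, hd, hqd⟩ := h hq
    obtain rfl : d = c := by
      by_contra hdc
      exact hp ((F.disjoint hd hc hdc).mono_left hqd).eq_bot
    rwa [inf_eq_left.2 hqd]
  · intro hp
    obtain ⟨c, hc, hpc⟩ := h hp
    exact ⟨c, hc, P.ne_bot hp, p, hp, inf_eq_left.2 hpc⟩

theorem card_parts_eq_sum_card_parts_restrict {F P : Finpartition a} (h : P ≤ F) :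
    #P.parts = ∑ c ∈ F.parts.attach, #(P.restrict (F.le c.2)).parts := by
  conv_lhs => rw [← bind_restrict_of_le h]
  exact card_bind _

def refinePart (F : Finpartition a) (c : α) (Q : Finpartition c) : Finpartition a :=
  F.bind fun d hd => if h : d = c then Q.copy h.symm else indiscrete (F.ne_bot hd)

variable (F : Finpartition a) (Q : Finpartition c)

theorem refinePart_le : F.refinePart c Q ≤ F := bind_le _ _

theorem restrict_refinePart_self (hc : c ∈ F.parts) :
    (F.refinePart c Q).restrict (F.le hc) = Q := by
  rw [refinePart, restrict_bind _ _ hc, dif_pos rfl]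
  rfl

theorem restrict_refinePart_of_ne {d : α} (hd : d ∈ F.parts) (hdc : d ≠ c) :
    (F.refinePart c Q).restrict (F.le hd) = indiscrete (F.ne_bot hd) := by
  rw [refinePart, restrict_bind _ _ hd, dif_neg hdc]

theorem card_parts_refinePart (hc : c ∈ F.parts) :
    #(F.refinePart c Q).parts + 1 = #F.parts + #Q.parts := by
  have hrest : ∑ d ∈ F.parts.attach.erase ⟨c, hc⟩,
      #((F.refinePart c Q).restrict (F.le d.2)).parts = #F.parts - 1 := by
    rw [sum_congr rfl (g := fun _ => 1), sum_const, card_erase_of_mem (mem_attach _ _),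
      card_attach, smul_eq_mul, mul_one]
    intro d hd
    have hdc : d.1 ≠ c := fun h => (mem_erase.1 hd).1 (Subtype.ext h)
    rw [restrict_refinePart_of_ne F Q d.2 hdc, indiscrete_parts, card_singleton]
  have hF : 0 < #F.parts := card_pos.2 ⟨c, hc⟩
  rw [card_parts_eq_sum_card_parts_restrict (F.refinePart_le Q),
    ← sum_erase_add _ _ (mem_attach _ ⟨c, hc⟩), hrest, restrict_refinePart_self F Q hc]
  omega

theorem eq_of_refinePart_eq {c' : α} {Q' : Finpartition c'} (hc : c ∈ F.parts)
    (hQ : #Q.parts ≠ 1) (h : F.refinePart c Q = F.refinePart c' Q') : c = c' := by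
  by_contra hne
  have := congrArg (fun R => #(R.restrict (F.le hc)).parts) h
  simp only [restrict_refinePart_self F Q hc, restrict_refinePart_of_ne F Q' hc hne,
    indiscrete_parts, card_singleton] at this
  exact hQ this

theorem exists_refinePart_eq {P : Finpartition a} (h : P ≤ F)
    (hcard : #P.parts = #F.parts + 1) :
    ∃ c ∈ F.parts, ∃ Q : Finpartition c, #Q.parts = 2 ∧ F.refinePart c Q = P := by
  obtain ⟨⟨c, hc⟩, -, h2, h1⟩ := exists_eq_two_of_sum_eq_card_add_one
    (s := F.parts.attach) (n := fun d => #(P.restrict (F.le d.2)).parts)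
    (fun d _ => card_pos.2 ((P.restrict _).parts_nonempty (F.ne_bot d.2)))
    (by rw [← card_parts_eq_sum_card_parts_restrict h, hcard, card_attach])
  refine ⟨c, hc, P.restrict (F.le hc), h2, ?_⟩
  conv_rhs => rw [← bind_restrict_of_le h]
  unfold refinePart
  congr 1
  funext d hd
  split_ifs with hdc
  · subst hdc
    rfl
  · refine (eq_indiscrete_of_card_parts_eq_one _ _ (h1 ⟨d, hd⟩ (mem_attach _ _) ?_)).symm
    exact fun h => hdc (congrArg Subtype.val h)

end DistribLattice

section Finset

variable {α : Type*} [DecidableEq α]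

def bipartition {c d : Finset α} (hd : d ≠ ∅) (hcd : c \ d ≠ ∅) (hdc : d ⊆ c) :
    Finpartition c :=
  (indiscrete hcd).extend hd disjoint_sdiff_self_left (sdiff_union_of_subset hdc)

theorem bipartition_parts {c d : Finset α} (hd : d ≠ ∅) (hcd : c \ d ≠ ∅) (hdc : d ⊆ c) :
    (bipartition hd hcd hdc).parts = {d, c \ d} := rfl

theorem parts_eq_pair_part_sdiff {c : Finset α} {Q : Finpartition c} (hQ : #Q.parts = 2)
    {x : α} (hx : x ∈ c) : Q.parts = {Q.part x, c \ Q.part x} := by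
  obtain ⟨p, q, hpq, hparts⟩ := card_eq_two.1 hQ
  have hunion : p ∪ q = c := by simpa [hparts] using Q.sup_parts
  have hdisj : Disjoint p q := Q.disjoint (by simp [hparts]) (by simp [hparts]) hpq
  have hx : Q.part x ∈ ({p, q} : Finset (Finset α)) := hparts ▸ Q.part_mem.2 hx
  rcases mem_insert.1 hx with hxp | hxq
  · rw [hparts, hxp, ← hunion, union_sdiff_cancel_left hdisj]
  · rw [hparts, mem_singleton.1 hxq, ← hunion, union_sdiff_cancel_right hdisj, pair_comm]

theorem card_filter_card_parts_eq_two {c : Finset α} (hc : c.Nonempty) :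
    #{Q : Finpartition c | #Q.parts = 2} = 2 ^ (#c - 1) - 1 := by
  obtain ⟨x, hx⟩ := hc
  have hT : #((c.erase x).powerset.erase ∅) = 2 ^ (#c - 1) - 1 := by
    rw [card_erase_of_mem (empty_mem_powerset _), card_powerset, card_erase_of_mem hx]
  rw [← hT]
  refine card_bij (fun Q _ => c \ Q.part x) ?_ ?_ ?_
  · intro Q hQ
    have hmem : c \ Q.part x ∈ Q.parts := by
      rw [parts_eq_pair_part_sdiff (mem_filter.1 hQ).2 hx]
      exact mem_insert_of_mem (mem_singleton_self _)
    refine mem_erase.2 ⟨Q.ne_empty hmem, ?_⟩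
    exact mem_powerset.2 fun y hy => mem_erase.2
      ⟨by rintro rfl; exact (mem_sdiff.1 hy).2 (Q.mem_part_self.2 hx), (mem_sdiff.1 hy).1⟩
  · intro Q hQ Q' hQ' h
    have hpart : Q.part x = Q'.part x := by
      rw [← Finset.sdiff_sdiff_eq_self (Q.part_subset x), h,
        Finset.sdiff_sdiff_eq_self (Q'.part_subset x)]
    ext1
    rw [parts_eq_pair_part_sdiff (mem_filter.1 hQ).2 hx,
      parts_eq_pair_part_sdiff (mem_filter.1 hQ').2 hx, hpart]
  · intro d hd
    obtain ⟨hd, hdc⟩ := mem_erase.1 hd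
    have hdc := mem_powerset.1 hdc
    have hxd : x ∈ c \ d := mem_sdiff.2 ⟨hx, fun h => (mem_erase.1 (hdc h)).1 rfl⟩
    have hdc' : d ⊆ c := hdc.trans (erase_subset x c)
    let Q := bipartition hd (ne_empty_of_mem hxd) hdc'
    have hpart : Q.part x = c \ d := Q.part_eq_of_mem (by simp [Q, bipartition_parts]) hxd
    refine ⟨Q, mem_filter.2 ⟨mem_univ _, ?_⟩, by rw [hpart, Finset.sdiff_sdiff_eq_self hdc']⟩
    rw [bipartition_parts, card_pair]
    intro h
    exact (mem_sdiff.1 hxd).2 (h ▸ hxd)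

theorem ncard_le_and_card_parts_eq_add_one {s : Finset α} (F : Finpartition s) :
    {P : Finpartition s | P ≤ F ∧ #P.parts = #F.parts + 1}.ncard =
      ∑ c ∈ F.parts, (2 ^ (#c - 1) - 1) := by
  let e : (Σ c : F.parts, {Q : Finpartition c.1 // #Q.parts = 2}) →
      {P : Finpartition s | P ≤ F ∧ #P.parts = #F.parts + 1} := fun cQ =>
    ⟨F.refinePart cQ.1 cQ.2, F.refinePart_le _, by
      have := F.card_parts_refinePart cQ.2.1 cQ.1.2
      have := cQ.2.2
      omega⟩
  have he : Function.Bijective e := by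
    constructor
    · rintro ⟨⟨c, hc⟩, Q, hQ⟩ ⟨⟨c', hc'⟩, Q', hQ'⟩ h
      have h : F.refinePart c Q = F.refinePart c' Q' := congrArg Subtype.val h
      obtain rfl := F.eq_of_refinePart_eq Q hc (by omega) h
      obtain rfl : Q = Q' := by
        simpa only [restrict_refinePart_self F _ hc] using congrArg (·.restrict (F.le hc)) h
      rfl
    · rintro ⟨P, hle, hcard⟩
      obtain ⟨c, hc, Q, hQ, rfl⟩ := F.exists_refinePart_eq hle hcard
      exact ⟨⟨⟨c, hc⟩, Q, hQ⟩, rfl⟩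
  rw [← Nat.card_coe_set_eq, ← Nat.card_eq_of_bijective e he, Nat.card_sigma,
    ← sum_coe_sort F.parts]
  refine Fintype.sum_congr _ _ fun c => ?_
  rw [Nat.card_eq_fintype_card, Fintype.card_subtype,
    card_filter_card_parts_eq_two (F.nonempty_of_mem_parts c.2)]

end Finset

end Finpartition

section Sigma

open SimpleGraph

variable {ι : Type*} (α : ι → Type*) [∀ i, Fintype (α i)]

def sigmaFiber (i : ι) : Finset (Σ i, α i) := ({i} : Finset ι).sigma fun _ => univ

variable {α} in
theorem mem_sigmaFiber {i : ι} {x : Σ i, α i} : x ∈ sigmaFiber α i ↔ x.1 = i := by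
  simp [sigmaFiber]

theorem card_sigmaFiber (i : ι) : #(sigmaFiber α i) = Fintype.card (α i) := by
  simp [sigmaFiber]

variable [∀ i, Nonempty (α i)]

theorem sigmaFiber_injective : Function.Injective (sigmaFiber α) := fun i j h => by
  obtain ⟨y⟩ := (inferInstance : Nonempty (α i))
  exact mem_sigmaFiber.1 (h ▸ mem_sigmaFiber.2 rfl : (⟨i, y⟩ : Σ i, α i) ∈ sigmaFiber α j)

variable [Fintype ι] [DecidableEq ι] [∀ i, DecidableEq (α i)]

def sigmaFiberPartition : Finpartition (univ : Finset (Σ i, α i)) :=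
  Finpartition.ofExistsUnique (univ.image (sigmaFiber α)) (fun _ _ => subset_univ _)
    (fun x _ => ⟨sigmaFiber α x.1, ⟨mem_image_of_mem _ (mem_univ _), mem_sigmaFiber.2 rfl⟩,
      fun p ⟨hp, hxp⟩ => by
        obtain ⟨i, -, rfl⟩ := mem_image.1 hp
        rw [mem_sigmaFiber.1 hxp]⟩)
    (fun h => by
      obtain ⟨i, -, hi⟩ := mem_image.1 h
      obtain ⟨y⟩ := (inferInstance : Nonempty (α i))
      exact notMem_empty _ (hi ▸ mem_sigmaFiber.2 rfl : (⟨i, y⟩ : Σ i, α i) ∈ ∅))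

theorem sigmaFiberPartition_parts :
    (sigmaFiberPartition α).parts = univ.image (sigmaFiber α) := rfl

theorem card_parts_sigmaFiberPartition : #(sigmaFiberPartition α).parts = Fintype.card ι := by
  rw [sigmaFiberPartition_parts, card_image_of_injective _ (sigmaFiber_injective α), card_univ]

theorem le_sigmaFiberPartition_iff {P : Finpartition (univ : Finset (Σ i, α i))} :
    P ≤ sigmaFiberPartition α ↔
      ∀ p ∈ P.parts, ∀ v ∈ p, ∀ w ∈ p, ¬ (completeMultipartiteGraph α).Adj v w := by
  have hadj : ∀ v w : Σ i, α i, (completeMultipartiteGraph α).Adj v w ↔ v.1 ≠ w.1 :=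
    fun _ _ => Iff.rfl
  simp only [hadj, not_not]
  constructor
  · intro h p hp v hv w hw
    obtain ⟨c, hc, hpc⟩ := h hp
    obtain ⟨i, -, rfl⟩ := mem_image.1 hc
    rw [mem_sigmaFiber.1 (hpc hv), mem_sigmaFiber.1 (hpc hw)]
  · intro h p hp
    obtain ⟨v, hv⟩ := P.nonempty_of_mem_parts hp
    exact ⟨sigmaFiber α v.1, mem_image_of_mem _ (mem_univ _),
      fun w hw => mem_sigmaFiber.2 (h p hp v hv w hw).symm⟩

theorem ncard_independent_finpartitions_completeMultipartiteGraph :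
    {P : Finpartition (univ : Finset (Σ i, α i)) | #P.parts = Fintype.card ι + 1 ∧
        ∀ s ∈ P.parts, ∀ v ∈ s, ∀ w ∈ s, ¬ (completeMultipartiteGraph α).Adj v w}.ncard =
      ∑ i, (2 ^ (Fintype.card (α i) - 1) - 1) := by
  have hset : {P : Finpartition (univ : Finset (Σ i, α i)) | #P.parts = Fintype.card ι + 1 ∧
        ∀ s ∈ P.parts, ∀ v ∈ s, ∀ w ∈ s, ¬ (completeMultipartiteGraph α).Adj v w} =
      {P | P ≤ sigmaFiberPartition α ∧ #P.parts = #(sigmaFiberPartition α).parts + 1} := by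
    ext P
    rw [card_parts_sigmaFiberPartition]
    exact and_comm.trans (and_congr_left' (le_sigmaFiberPartition_iff α).symm)
  rw [hset, Finpartition.ncard_le_and_card_parts_eq_add_one, sigmaFiberPartition_parts,
    sum_image fun i _ j _ h => sigmaFiber_injective α h]
  simp_rw [card_sigmaFiber]

end Sigma

theorem stmt3 (t : ℕ) (u : Fin t → ℕ) (hu : ∀ i, 1 ≤ u i) :
    {P : Finpartition (Finset.univ : Finset (Σ i : Fin t, Fin (u i))) |
        P.parts.card = t + 1 ∧
        ∀ s ∈ P.parts, ∀ v ∈ s, ∀ w ∈ s,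
          ¬ (SimpleGraph.completeMultipartiteGraph (fun i : Fin t => Fin (u i))).Adj v w
      }.ncard
      = (∑ i : Fin t, 2 ^ (u i - 1)) - t := by
  have : ∀ i, Nonempty (Fin (u i)) := fun i => ⟨⟨0, hu i⟩⟩
  have key := ncard_independent_finpartitions_completeMultipartiteGraph fun i => Fin (u i)
  simp only [Fintype.card_fin] at key
  rw [key, sum_tsub_distrib _ fun i _ => Nat.one_le_two_pow, sum_const, card_univ,
    Fintype.card_fin, smul_eq_mul, mul_one]
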